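/- arXiv:2512.11606 — 3 statements merged into one kernel-verified Lean document; each statement's English description precedes it below -/
import Mathlib

section
/- Suppose nonnegative functions π̂ : U → ℝ and r : U → ℝ satisfy the invariant π(u, u_i) = π̂(u_i) + Σ_{u_j ∈ U} r(u_j) · π(u_j, u_i) for all u_i ∈ U, where π arises from a row-stochastic P with restart probability α. If r(u_j) ≤ ε_f for all u_j ∈ U and Σ_{u_j ∈ U} π(u_j, u_i) ≤ λ for all u_i, then 0 ≤ π(u, u_i) - π̂(u_i) ≤ ε_f · λ for all u_i ∈ U. -/
lemma pow_entry_nonneg {U : Type*} [Fintype U] [DecidableEq U]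
    (P : Matrix U U ℝ) (hnn : ∀ i j, 0 ≤ P i j) :
    ∀ (ℓ : ℕ) (i j : U), 0 ≤ (P ^ ℓ) i j := by
  intro ℓ
  induction ℓ with
  | zero => intro i j; simp [Matrix.one_apply]; positivity
  | succ n ih =>
      intro i j
      rw [pow_succ, Matrix.mul_apply]
      exact Finset.sum_nonneg fun k _ => mul_nonneg (ih i k) (hnn k j)

/-- Approximation guarantee from the forward-push invariant with bounded residues. -/
theorem push_invariant_error_bound {U : Type*} [Fintype U] [DecidableEq U]
    (P : Matrix U U ℝ) (α : ℝ) (hα0 : 0 < α) (hα1 : α < 1)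
    (hnn : ∀ i j, 0 ≤ P i j) (hrow : ∀ i, ∑ j, P i j = 1)
    (u : U) (πhat r : U → ℝ) (εf lam : ℝ)
    (hπhat : ∀ i, 0 ≤ πhat i) (hr : ∀ i, 0 ≤ r i)
    (hεf : 0 ≤ εf) (hlam : 0 ≤ lam)
    (hinv : ∀ ui : U,
      (∑' ℓ : ℕ, α * (1 - α) ^ ℓ * (P ^ ℓ) u ui)
        = πhat ui + ∑ uj, r uj * ∑' ℓ : ℕ, α * (1 - α) ^ ℓ * (P ^ ℓ) uj ui)
    (hrbound : ∀ uj, r uj ≤ εf)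
    (hcolsum : ∀ ui, ∑ uj, (∑' ℓ : ℕ, α * (1 - α) ^ ℓ * (P ^ ℓ) uj ui) ≤ lam) :
    ∀ ui : U,
      0 ≤ (∑' ℓ : ℕ, α * (1 - α) ^ ℓ * (P ^ ℓ) u ui) - πhat ui ∧
      (∑' ℓ : ℕ, α * (1 - α) ^ ℓ * (P ^ ℓ) u ui) - πhat ui ≤ εf * lam := by
  intro ui
  have hπnn : ∀ uj, 0 ≤ ∑' ℓ : ℕ, α * (1 - α) ^ ℓ * (P ^ ℓ) uj ui := fun uj =>
    tsum_nonneg fun ℓ => mul_nonneg (mul_nonneg hα0.le (pow_nonneg (by linarith) ℓ))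
      (pow_entry_nonneg P hnn ℓ uj ui)
  have key : (∑' ℓ : ℕ, α * (1 - α) ^ ℓ * (P ^ ℓ) u ui) - πhat ui
      = ∑ uj, r uj * ∑' ℓ : ℕ, α * (1 - α) ^ ℓ * (P ^ ℓ) uj ui := by
    rw [hinv ui]; ring
  rw [key]
  constructor
  · exact Finset.sum_nonneg fun uj _ => mul_nonneg (hr uj) (hπnn uj)
  · calc ∑ uj, r uj * ∑' ℓ : ℕ, α * (1 - α) ^ ℓ * (P ^ ℓ) uj ui
        ≤ ∑ uj, εf * ∑' ℓ : ℕ, α * (1 - α) ^ ℓ * (P ^ ℓ) uj ui :=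
          Finset.sum_le_sum fun uj _ =>
            mul_le_mul_of_nonneg_right (hrbound uj) (hπnn uj)
      _ = εf * ∑ uj, ∑' ℓ : ℕ, α * (1 - α) ^ ℓ * (P ^ ℓ) uj ui := by
          rw [Finset.mul_sum]
      _ ≤ εf * lam := mul_le_mul_of_nonneg_left (hcolsum ui) hεf
end

section
/- The forward-push invariant is preserved under one push operation: if π(u, ·) = π̂(·) + Σ_{u_j} r(u_j)·π(u_j, ·) holds and we update π̂'(u_k) = π̂(u_k) + α·r(u_k), r'(u_j) = r(u_j) - [j=k]·r(u_k) + (1-α)·r(u_k)·P[u_k, u_j] for a chosen node u_k, then π(u, ·) = π̂'(·) + Σ_{u_j} r'(u_j)·π(u_j, ·) still holds. -/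
/-- The forward-push invariant is preserved under one push operation on node `uk`. -/
theorem push_preserves_invariant {U : Type*} [Fintype U] [DecidableEq U]
    (P : Matrix U U ℝ) (α : ℝ) (hα0 : 0 < α) (hα1 : α < 1)
    (hnn : ∀ i j, 0 ≤ P i j) (hrow : ∀ i, ∑ j, P i j = 1)
    (u uk : U) (πhat r : U → ℝ)
    (hrec : ∀ k i : U,
      (∑' ℓ : ℕ, α * (1 - α) ^ ℓ * (P ^ ℓ) k i)
        = α * (if k = i then 1 else 0)
          + (1 - α) * ∑ j, P k j * ∑' ℓ : ℕ, α * (1 - α) ^ ℓ * (P ^ ℓ) j i)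
    (hinv : ∀ i : U,
      (∑' ℓ : ℕ, α * (1 - α) ^ ℓ * (P ^ ℓ) u i)
        = πhat i + ∑ j, r j * ∑' ℓ : ℕ, α * (1 - α) ^ ℓ * (P ^ ℓ) j i) :
    ∀ i : U,
      (∑' ℓ : ℕ, α * (1 - α) ^ ℓ * (P ^ ℓ) u i)
        = (πhat i + if i = uk then α * r uk else 0)
          + ∑ j, (r j - (if j = uk then r uk else 0) + (1 - α) * r uk * P uk j)
              * ∑' ℓ : ℕ, α * (1 - α) ^ ℓ * (P ^ ℓ) j i := by
  intro i
  set f : U → ℝ := fun j => ∑' ℓ : ℕ, α * (1 - α) ^ ℓ * (P ^ ℓ) j i with hf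
  have key := hrec uk i
  have hsub : ∑ j, (if j = uk then r uk * f j else 0) = r uk * f uk := by
    simp
  have hsplit : ∑ j, (r j - (if j = uk then r uk else 0) + (1 - α) * r uk * P uk j) * f j
      = (∑ j, r j * f j) - r uk * f uk + (1 - α) * r uk * ∑ j, P uk j * f j := by
    rw [Finset.mul_sum]
    have : ∀ j : U, (r j - (if j = uk then r uk else 0) + (1 - α) * r uk * P uk j) * f j
        = r j * f j - (if j = uk then r uk * f j else 0) + (1 - α) * r uk * (P uk j * f j) := by
      intro j; by_cases h : j = uk <;> simp [h] <;> ring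
    simp only [this]
    rw [Finset.sum_add_distrib, Finset.sum_sub_distrib, hsub]
  have hfa : ∀ j, (∑' ℓ : ℕ, α * (1 - α) ^ ℓ * (P ^ ℓ) j i) = f j := fun j => rfl
  rw [hinv i, hsplit]
  simp only [hfa] at key ⊢
  have key' : (1 - α) * ∑ j, P uk j * f j = f uk - α * (if uk = i then 1 else 0) := by
    linarith [key]
  rw [mul_comm (1 - α) (r uk), mul_assoc, key']
  by_cases h : i = uk
  · simp only [h, if_pos rfl, ite_true]; ring
  · simp only [h, if_neg h, if_neg (fun hh : uk = i => h hh.symm), ite_false]; ring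
end

section
/- Let π̂_T be the result of T power-iteration steps applied to the all-ones row vector 1, i.e. π̂_T = 1 · Σ_{ℓ=0}^{T-1} α(1-α)^ℓ P^ℓ. Then for every u_i ∈ U, the column sum satisfies Σ_{u_j ∈ U} π(u_j, u_i) ≤ max_{u_k ∈ U} π̂_T(u_k) + |U|·(1-α)^T. -/
/-! Every power of a row-stochastic matrix is row-stochastic, so its entries lie in `[0, 1]`.
Hence each entry of the series defining `π` differs from its truncation after `T` terms by at most
the tail weight `∑_{ℓ ≥ T} α (1 - α) ^ ℓ = (1 - α) ^ T`; summing over the column gives the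
`|U| (1 - α) ^ T` term, and the truncated column sum is bounded by the maximum over all columns. -/

open Finset Matrix

theorem tsum_mul_geometric_shift_eq {α : ℝ} (hα0 : 0 < α) (hα1 : α ≤ 1) (T : ℕ) :
    ∑' ℓ : ℕ, α * (1 - α) ^ (ℓ + T) = (1 - α) ^ T := by
  have hgeom : ∑' ℓ : ℕ, (1 - α) ^ ℓ = α⁻¹ := by
    rw [tsum_geometric_of_lt_one (by linarith) (by linarith), sub_sub_cancel]
  calc ∑' ℓ : ℕ, α * (1 - α) ^ (ℓ + T)
      = α * (1 - α) ^ T * ∑' ℓ : ℕ, (1 - α) ^ ℓ := by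
        rw [← tsum_mul_left]
        congr 1 with ℓ
        ring
    _ = (1 - α) ^ T := by
        rw [hgeom, mul_right_comm, mul_inv_cancel₀ hα0.ne', one_mul]

theorem tsum_mul_geometric_le_sum_range_add {α : ℝ} (hα0 : 0 < α) (hα1 : α ≤ 1) {f : ℕ → ℝ}
    (hf0 : ∀ ℓ, 0 ≤ f ℓ) (hf1 : ∀ ℓ, f ℓ ≤ 1) (T : ℕ) :
    ∑' ℓ : ℕ, α * (1 - α) ^ ℓ * f ℓ
      ≤ ∑ ℓ ∈ range T, α * (1 - α) ^ ℓ * f ℓ + (1 - α) ^ T := by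
  have hweight_nonneg : ∀ ℓ, 0 ≤ α * (1 - α) ^ ℓ := fun ℓ =>
    mul_nonneg hα0.le (pow_nonneg (by linarith) ℓ)
  have hweight : Summable fun ℓ : ℕ => α * (1 - α) ^ ℓ :=
    (summable_geometric_of_lt_one (by linarith) (by linarith)).mul_left α
  have hterm_le : ∀ ℓ, α * (1 - α) ^ ℓ * f ℓ ≤ α * (1 - α) ^ ℓ := fun ℓ =>
    mul_le_of_le_one_right (hweight_nonneg ℓ) (hf1 ℓ)
  have hterm : Summable fun ℓ : ℕ => α * (1 - α) ^ ℓ * f ℓ :=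
    hweight.of_nonneg_of_le (fun ℓ => mul_nonneg (hweight_nonneg ℓ) (hf0 ℓ)) hterm_le
  have htail : ∑' ℓ : ℕ, α * (1 - α) ^ (ℓ + T) * f (ℓ + T) ≤ (1 - α) ^ T := by
    rw [← tsum_mul_geometric_shift_eq hα0 hα1 T]
    exact (hterm.comp_injective (add_left_injective T)).tsum_le_tsum (fun ℓ => hterm_le (ℓ + T))
      (hweight.comp_injective (add_left_injective T))
  rw [← hterm.sum_add_tsum_nat_add T]
  exact add_le_add_right htail _

theorem ahpp_column_sum_bound_general {U : Type*} [Fintype U] [DecidableEq U] [Nonempty U]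
    (P : Matrix U U ℝ) (α : ℝ) (hα0 : 0 < α) (hα1 : α < 1)
    (hnn : ∀ i j, 0 ≤ P i j) (hrow : ∀ i, ∑ j, P i j = 1)
    (T : ℕ) :
    ∀ ui : U,
      (∑ uj, ∑' ℓ : ℕ, α * (1 - α) ^ ℓ * (P ^ ℓ) uj ui)
        ≤ (Finset.univ.sup' Finset.univ_nonempty
            (fun uk => ∑ uj, ∑ ℓ ∈ Finset.range T, α * (1 - α) ^ ℓ * (P ^ ℓ) uj uk))
          + (Fintype.card U : ℝ) * (1 - α) ^ T := by
  intro ui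
  have hpow : ∀ ℓ : ℕ, P ^ ℓ ∈ rowStochastic ℝ U := fun ℓ =>
    pow_mem (mem_rowStochastic_iff_sum.2 ⟨hnn, hrow⟩) ℓ
  calc ∑ uj, ∑' ℓ : ℕ, α * (1 - α) ^ ℓ * (P ^ ℓ) uj ui
      ≤ ∑ uj, (∑ ℓ ∈ range T, α * (1 - α) ^ ℓ * (P ^ ℓ) uj ui + (1 - α) ^ T) :=
        sum_le_sum fun uj _ => tsum_mul_geometric_le_sum_range_add hα0 hα1.le
          (fun ℓ => nonneg_of_mem_rowStochastic (hpow ℓ))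
          (fun ℓ => le_one_of_mem_rowStochastic (hpow ℓ)) T
    _ = ∑ uj, ∑ ℓ ∈ range T, α * (1 - α) ^ ℓ * (P ^ ℓ) uj ui
          + (Fintype.card U : ℝ) * (1 - α) ^ T := by
        rw [sum_add_distrib, sum_const, card_univ, nsmul_eq_mul]
    _ ≤ _ := add_le_add_left
        (le_sup' (fun uk => ∑ uj, ∑ ℓ ∈ range T, α * (1 - α) ^ ℓ * (P ^ ℓ) uj uk) (mem_univ ui)) _

/-- Upper bound on column sums of the AHPP matrix via power iteration on the all-ones vector. -/
theorem ahpp_column_sum_bound {U : Type*} [Fintype U] [DecidableEq U] [Nonempty U]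
    (P : Matrix U U ℝ) (α : ℝ) (hα0 : 0 < α) (hα1 : α < 1)
    (hnn : ∀ i j, 0 ≤ P i j) (hle : ∀ i j, P i j ≤ 1) (hrow : ∀ i, ∑ j, P i j = 1)
    (T : ℕ) :
    ∀ ui : U,
      (∑ uj, ∑' ℓ : ℕ, α * (1 - α) ^ ℓ * (P ^ ℓ) uj ui)
        ≤ (Finset.univ.sup' Finset.univ_nonempty
            (fun uk => ∑ uj, ∑ ℓ ∈ Finset.range T, α * (1 - α) ^ ℓ * (P ^ ℓ) uj uk))
          + (Fintype.card U : ℝ) * (1 - α) ^ T :=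
  ahpp_column_sum_bound_general P α hα0 hα1 hnn hrow T
end
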